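/- For every m ≤ d, S_AS^m ⊆ AN_Y, i.e., the union of all minimally invariant sets of cardinality at most m consists only of ancestors of Y. -/

import Mathlib

/-- Nodes of the graph: the environment node `E`, predictor nodes `V j` for
`j ∈ {1, …, d}` (represented by `Fin d`), and the response node `Y`. -/
inductive Node (d : ℕ) : Type where
  | E : Node d
  | V : Fin d → Node d
  | Y : Node d
deriving DecidableEq

/-- A directed acyclic graph on `{E} ∪ {1, …, d} ∪ {Y}` in which `E` has no
parents (`E` is exogenous). -/
structure CGraph (d : ℕ) where
  adj : Node d → Node d → Prop
  acyclic : ∀ v, ¬ Relation.TransGen adj v v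
  exogenous : ∀ v, ¬ adj v Node.E

namespace CGraph

variable {d : ℕ} (G : CGraph d)

/-- Undirected adjacency: an edge between `u` and `v` in either direction. -/
def Edge (u v : Node d) : Prop := G.adj u v ∨ G.adj v u

/-- `p` is a path between `a` and `b`: a duplicate-free list of nodes starting
at `a`, ending at `b`, with consecutive nodes adjacent (in either direction). -/
def IsPath (p : List (Node d)) (a b : Node d) : Prop :=
  p.head? = some a ∧ p.getLast? = some b ∧ p.Nodup ∧ p.Chain' G.Edge

/-- `x` is a (strict) descendant of `v`. -/
def Desc (v x : Node d) : Prop := Relation.TransGen G.adj v x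

/-- The consecutive triple `u, m, w` on a path blocks the path given `C`:
either `m` is a non-collider lying in `C`, or `m` is a collider such that
neither `m` nor any of its descendants lies in `C`. -/
def BlockedAt (C : Set (Node d)) (u m w : Node d) : Prop :=
  (¬ (G.adj u m ∧ G.adj w m) ∧ m ∈ C) ∨
  ((G.adj u m ∧ G.adj w m) ∧ m ∉ C ∧ ∀ x, G.Desc m x → x ∉ C)

/-- A path `p` is blocked by `C` if some consecutive triple on it blocks it. -/
def Blocked (C : Set (Node d)) (p : List (Node d)) : Prop :=
  ∃ q u m w r, p = q ++ u :: m :: w :: r ∧ G.BlockedAt C u m w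

/-- `a` and `b` are d-separated given `C`: every path between them is blocked. -/
def DSep (a b : Node d) (C : Set (Node d)) : Prop :=
  ∀ p, G.IsPath p a b → G.Blocked C p

/-- `S ⊆ {1, …, d}` is invariant if `E` and `Y` are d-separated given `S`. -/
def Invariant (S : Set (Fin d)) : Prop := G.DSep Node.E Node.Y (Node.V '' S)

/-- `S` is minimally invariant if it is invariant and no strict subset of `S`
is invariant. -/
def MinInvariant (S : Set (Fin d)) : Prop :=
  G.Invariant S ∧ ∀ S', S' ⊂ S → ¬ G.Invariant S'

/-- `S_AS`: the union of all minimally invariant sets. -/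
def SAS : Set (Fin d) := ⋃₀ {S | G.MinInvariant S}

/-- `S_ICP`: the intersection of all invariant sets (`∅` if there are none). -/
def SICP : Set (Fin d) :=
  {j | (∃ S, G.Invariant S) ∧ ∀ S, G.Invariant S → j ∈ S}

/-- `S_AS^m`: the union of all minimally invariant sets of cardinality `≤ m`. -/
def SASm (m : ℕ) : Set (Fin d) := ⋃₀ {S | G.MinInvariant S ∧ S.ncard ≤ m}

/-- The parents of `Y` among `{1, …, d}`. -/
def paY : Set (Fin d) := {j | G.adj (Node.V j) Node.Y}

/-- The children of `E` among `{1, …, d}`. -/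
def chE : Set (Fin d) := {j | G.adj Node.E (Node.V j)}

/-- The ancestors of `Y` among `{1, …, d}`. -/
def anY : Set (Fin d) := {j | Relation.TransGen G.adj (Node.V j) Node.Y}

/-- `PA(A)`: the union of the parent sets of the elements of `A ⊆ {1, …, d}`. -/
def paOf (A : Set (Fin d)) : Set (Fin d) := {j | ∃ i ∈ A, G.adj (Node.V j) (Node.V i)}

end CGraph

/-!
If `S` is invariant, then so is `S ∩ AN_Y`. Take a path blocked by `S` at a non-collider
`j ∉ AN_Y` and walk along it from `j` in the direction of an edge leaving `j`. The walk
cannot stay directed up to the end of the path, since that end is `Y` (and `j ∉ AN_Y`) or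
`E` (which has no parents), so it meets a collider that is a descendant of `j`. Neither this
collider nor its descendants are ancestors of `Y`, so it blocks the path given `S ∩ AN_Y`.
Minimality of `S` then forces `S = S ∩ AN_Y`.
-/

open Relation

namespace List

variable {α : Type*} {r : α → α → Prop}

theorem IsChain.transGen_getLast_or_exists_collider :
    ∀ {l : List α} {a b : α}, IsChain (SymmGen r) (a :: b :: l) → r a b →
      TransGen r a ((b :: l).getLast (cons_ne_nil b l)) ∨
        ∃ q x c y t, a :: b :: l = q ++ x :: c :: y :: t ∧ r x c ∧ r y c ∧ TransGen r a c
  | [], _, _, _, hab => Or.inl (.single hab)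
  | z :: l, a, b, hchain, hab => by
    obtain ⟨-, hchain'⟩ := isChain_cons_cons.mp hchain
    rcases (isChain_cons_cons.mp hchain').1 with hbz | hzb
    · rcases hchain'.transGen_getLast_or_exists_collider hbz with
        hlast | ⟨q, x, c, y, t, hdec, hx, hy, hc⟩
      · exact Or.inl (.head hab hlast)
      · exact Or.inr ⟨a :: q, x, c, y, t, by rw [hdec, cons_append], hx, hy, .head hab hc⟩
    · exact Or.inr ⟨[], a, b, z, l, rfl, hab, hzb, .single hab⟩

end List

namespace CGraph

variable {d : ℕ} (G : CGraph d)

theorem not_transGen_E (v : Node d) : ¬ TransGen G.adj v Node.E := by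
  intro h
  cases h with
  | single h => exact G.exogenous _ h
  | tail _ h => exact G.exogenous _ h

variable {G}

theorem IsPath.reverse {p : List (Node d)} {a b : Node d} (hp : G.IsPath p a b) :
    G.IsPath p.reverse b a :=
  ⟨by rw [List.head?_reverse, hp.2.1], by rw [List.getLast?_reverse, hp.1],
    List.nodup_reverse.mpr hp.2.2.1,
    List.isChain_reverse.mpr (hp.2.2.2.imp fun _ _ => Or.symm)⟩

theorem Blocked.reverse {C : Set (Node d)} {p : List (Node d)} (hp : G.Blocked C p) :
    G.Blocked C p.reverse := by
  obtain ⟨q, u, m, w, r, rfl, hb⟩ := hp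
  refine ⟨r.reverse, w, m, u, q.reverse, by simp, ?_⟩
  exact hb.imp (fun h => ⟨fun h' => h.1 h'.symm, h.2⟩) fun h => ⟨h.1.symm, h.2⟩

theorem blocked_of_collider {C : Set (Node d)} {q t : List (Node d)} {x c y : Node d}
    (hx : G.adj x c) (hy : G.adj y c) (hc : ∀ z, ReflTransGen G.adj c z → z ∉ C) :
    G.Blocked C (q ++ x :: c :: y :: t) :=
  ⟨q, x, c, y, t, rfl, Or.inr ⟨⟨hx, hy⟩, hc c .refl, fun z hz => hc z hz.to_reflTransGen⟩⟩

theorem blocked_of_adj_of_not_transGen {C : Set (Node d)} {p q s : List (Node d)}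
    {a b v w : Node d} (hp : G.IsPath p a b) (hdec : p = q ++ v :: w :: s) (hvw : G.adj v w)
    (hvb : ¬ TransGen G.adj v b) (hC : ∀ z, TransGen G.adj v z → z ∉ C) :
    G.Blocked C p := by
  subst hdec
  have hchain : (v :: w :: s).IsChain (SymmGen G.adj) :=
    hp.2.2.2.infix ⟨q, [], List.append_nil _⟩
  have hlast : (w :: s).getLast (List.cons_ne_nil w s) = b := by
    rw [List.getLast_eq_iff_getLast?_eq_some]
    simpa using hp.2.1
  rcases hchain.transGen_getLast_or_exists_collider hvw with
    hvb' | ⟨q', x, c, y, t, hdec, hx, hy, hc⟩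
  · exact absurd (hlast ▸ hvb') hvb
  · rw [hdec, ← List.append_assoc]
    exact blocked_of_collider hx hy fun z hz => hC z (hc.trans_left hz)

theorem Invariant.inter_anY {S : Set (Fin d)} (hS : G.Invariant S) :
    G.Invariant (S ∩ G.anY) := by
  intro p hp
  obtain ⟨q, u, m, w, r, rfl, hb⟩ := hS p hp
  have hmono : Node.V '' (S ∩ G.anY) ⊆ Node.V '' S := Set.image_mono Set.inter_subset_left
  rcases hb with ⟨hnc, j, hjS, rfl⟩ | ⟨hcol, hm, hdesc⟩
  · by_cases hj : j ∈ G.anY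
    · exact ⟨q, u, _, w, r, rfl, Or.inl ⟨hnc, j, ⟨hjS, hj⟩, rfl⟩⟩
    have hC : ∀ z, TransGen G.adj (Node.V j) z → z ∉ Node.V '' (S ∩ G.anY) := by
      rintro z hz ⟨k, ⟨-, hk⟩, rfl⟩
      exact hj (hz.trans hk)
    have htriple : [u, Node.V j, w].IsChain G.Edge :=
      hp.2.2.2.infix ⟨q, r, List.append_assoc _ _ _⟩
    obtain ⟨hu, hw⟩ := List.isChain_cons_cons.mp htriple
    by_cases hjw : G.adj (Node.V j) w
    · exact blocked_of_adj_of_not_transGen hp (q := q ++ [u]) (s := r) (by simp) hjw hj hC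
    · have hju : G.adj (Node.V j) u := by
        have hwj : G.adj w (Node.V j) := (List.isChain_pair.mp hw).resolve_left hjw
        exact hu.resolve_left fun huj => hnc ⟨huj, hwj⟩
      have := blocked_of_adj_of_not_transGen hp.reverse
        (q := r.reverse ++ [w]) (s := q.reverse) (by simp) hju (G.not_transGen_E _) hC
      simpa using this.reverse
  · exact ⟨q, u, m, w, r, rfl,
      Or.inr ⟨hcol, fun h => hm (hmono h), fun x hx h => hdesc x hx (hmono h)⟩⟩

theorem MinInvariant.subset_anY {S : Set (Fin d)} (hS : G.MinInvariant S) : S ⊆ G.anY := by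
  by_contra hsub
  exact hS.2 _ (Set.inter_ssubset_left_iff.mpr hsub) hS.1.inter_anY

end CGraph

theorem SASm_subset_ancestors_general {d : ℕ} (G : CGraph d) (m : ℕ) :
    G.SASm m ⊆ G.anY := by
  rintro j ⟨S, ⟨hS, -⟩, hjS⟩
  exact hS.subset_anY hjS

/-- for every `m ≤ d`, `S_AS^m ⊆ AN_Y`: the union of all
minimally invariant sets of cardinality at most `m` consists only of
ancestors of `Y`. -/
theorem SASm_subset_ancestors {d : ℕ} (G : CGraph d) (m : ℕ) (hm : m ≤ d) :
    G.SASm m ⊆ G.anY :=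
  SASm_subset_ancestors_general G m
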